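/- Let P be a symmetric positive definite n×n real matrix with maximal eigenvalue λ. The function γ(θ) = -log det(I - θP) + tr((I - θP)^{-1} - I) is strictly convex on (0, 1/λ). -/

import Mathlib

/-! Diagonalising `P` turns `γ(θ)` into `∑ᵢ φ (1 - θ μᵢ)` with `φ t = -log t + t⁻¹ - 1` and
`μᵢ > 0` the eigenvalues of `P`. On `(0, 1/λ)` every argument `1 - θ μᵢ` is positive; `φ` is
strictly convex on `(0, ∞)` (strictly convex `-log` plus convex `t⁻¹`), precomposing with an
injective affine map keeps strict convexity, and so does a nonempty finite sum. -/

open Matrix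

section Convexity

variable {𝕜 E F β ι : Type*}

theorem StrictConvexOn.fun_sum [Semiring 𝕜] [PartialOrder 𝕜] [AddCommMonoid E] [SMul 𝕜 E]
    [AddCommMonoid β] [PartialOrder β] [IsOrderedCancelAddMonoid β] [DistribMulAction 𝕜 β]
    {s : Set E} {t : Finset ι} (ht : t.Nonempty) {f : ι → E → β}
    (hf : ∀ i ∈ t, StrictConvexOn 𝕜 s (f i)) :
    StrictConvexOn 𝕜 s fun x => ∑ i ∈ t, f i x := by
  classical
  induction ht using Finset.Nonempty.cons_induction with
  | singleton i => simpa using hf i (Finset.mem_singleton_self i)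
  | cons i t hi _ ih =>
    simp only [Finset.sum_cons]
    exact (hf i (Finset.mem_cons_self i t)).add
      (ih fun j hj => hf j (Finset.mem_cons_of_mem hj))

theorem StrictConvexOn.comp_affineMap_of_injective [Field 𝕜] [LinearOrder 𝕜]
    [AddCommGroup E] [AddCommGroup F] [Module 𝕜 E] [Module 𝕜 F]
    [AddCommMonoid β] [PartialOrder β] [SMul 𝕜 β] {f : F → β} {s : Set F}
    (hf : StrictConvexOn 𝕜 s f) (g : E →ᵃ[𝕜] F) (hg : Function.Injective g) :
    StrictConvexOn 𝕜 (g ⁻¹' s) (f ∘ g) :=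
  ⟨hf.1.affine_preimage g, fun x hx y hy hxy a b ha hb hab =>
    calc
      (f ∘ g) (a • x + b • y) = f (a • g x + b • g y) := by
        rw [Function.comp_apply, Convex.combo_affine_apply hab]
      _ < a • f (g x) + b • f (g y) := hf.2 hx hy (hg.ne hxy) ha hb hab⟩

theorem StrictConvexOn.comp_one_sub_mul {f : ℝ → ℝ} {s : Set ℝ} (hf : StrictConvexOn ℝ s f)
    {μ : ℝ} (hμ : μ ≠ 0) :
    StrictConvexOn ℝ {θ | 1 - θ * μ ∈ s} fun θ => f (1 - θ * μ) := by
  let g : ℝ →ᵃ[ℝ] ℝ := AffineMap.const ℝ ℝ 1 - μ • AffineMap.id ℝ ℝ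
  have hg : ∀ θ, g θ = 1 - θ * μ := fun θ => by simp [g, mul_comm]
  have hg_inj : Function.Injective g := fun x y hxy => by
    rw [hg, hg] at hxy
    exact mul_right_cancel₀ hμ (by linarith)
  simpa only [Set.preimage, Function.comp_def, hg] using hf.comp_affineMap_of_injective g hg_inj

theorem strictConvexOn_neg_log_add_inv_sub_one :
    StrictConvexOn ℝ (Set.Ioi 0) fun t : ℝ => -Real.log t + (t⁻¹ - 1) := by
  have hinv : ConvexOn ℝ (Set.Ioi 0) fun t : ℝ => t⁻¹ := by
    simpa using (strictConvexOn_zpow (m := -1) (by decide) (by decide)).convexOn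
  refine ((strictConcaveOn_log_Ioi.neg.add_convexOn hinv).add_const (-1)).congr fun t _ => ?_
  simp only [Pi.add_apply, Pi.neg_apply]
  ring

end Convexity

namespace Matrix.IsHermitian

section FunctionalCalculus

variable {𝕜 n : Type*} [RCLike 𝕜] [Fintype n] [DecidableEq n] {A : Matrix n n 𝕜}

theorem det_cfc (hA : A.IsHermitian) (f : ℝ → ℝ) :
    (cfc f A).det = ∏ i, (f (hA.eigenvalues i) : 𝕜) := by
  rw [hA.cfc_eq, IsHermitian.cfc, Unitary.conjStarAlgAut_apply, det_mul_right_comm,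
    Unitary.mul_star_self_of_mem (SetLike.coe_mem _), one_mul, det_diagonal]
  rfl

theorem trace_cfc (hA : A.IsHermitian) (f : ℝ → ℝ) :
    (cfc f A).trace = ∑ i, (f (hA.eigenvalues i) : 𝕜) := by
  rw [hA.cfc_eq, IsHermitian.cfc, Unitary.conjStarAlgAut_apply, trace_mul_cycle,
    Unitary.star_mul_self_of_mem (SetLike.coe_mem _), one_mul, trace_diagonal]
  rfl

theorem cfc_one_sub_mul (hA : A.IsHermitian) (θ : ℝ) :
    cfc (fun x => 1 - θ * x) A = 1 - θ • A := by
  rw [cfc_sub (fun _ => (1 : ℝ)) (θ * ·) A, cfc_const_one ℝ A, cfc_const_mul_id θ A]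

theorem cfc_inv_one_sub_mul_sub_one (hA : A.IsHermitian) {θ : ℝ}
    (hθ : ∀ i, 1 - θ * hA.eigenvalues i ≠ 0) :
    cfc (fun x => (1 - θ * x)⁻¹ - 1) A = (1 - θ • A)⁻¹ - 1 := by
  have hne : ∀ x ∈ spectrum ℝ A, 1 - θ * x ≠ 0 := by
    rw [hA.spectrum_real_eq_range_eigenvalues]
    rintro _ ⟨i, rfl⟩
    exact hθ i
  rw [cfc_sub (fun x => (1 - θ * x)⁻¹) (fun _ => (1 : ℝ)) A
      (A.finite_real_spectrum.continuousOn _), cfc_const_one ℝ A,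
    cfc_inv (fun x => 1 - θ * x) A hne, hA.cfc_one_sub_mul, nonsing_inv_eq_ringInverse]

end FunctionalCalculus

theorem neg_log_det_add_trace_eq_sum {n : Type*} [Fintype n] [DecidableEq n]
    {P : Matrix n n ℝ} (hP : P.IsHermitian) {θ : ℝ} (hθ : ∀ i, 0 < 1 - θ * hP.eigenvalues i) :
    -Real.log (1 - θ • P).det + ((1 - θ • P)⁻¹ - 1).trace =
      ∑ i, (-Real.log (1 - θ * hP.eigenvalues i) + ((1 - θ * hP.eigenvalues i)⁻¹ - 1)) := by
  have hne : ∀ i, 1 - θ * hP.eigenvalues i ≠ 0 := fun i => (hθ i).ne'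
  rw [← hP.cfc_inv_one_sub_mul_sub_one hne, ← hP.cfc_one_sub_mul, hP.det_cfc, hP.trace_cfc]
  simp only [RCLike.ofReal_real_eq_id, id]
  rw [Real.log_prod fun i _ => hne i, Finset.sum_add_distrib, Finset.sum_neg_distrib]

end Matrix.IsHermitian

/-- γ(θ) = -log det(I - θP) + tr((I - θP)⁻¹ - I) is strictly convex on (0, 1/λ). -/
theorem stmt_2 {n : ℕ} (P : Matrix (Fin n) (Fin n) ℝ) (hP : P.PosDef)
    (lam : ℝ) (hlam : IsGreatest (Set.range hP.1.eigenvalues) lam) :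
    StrictConvexOn ℝ (Set.Ioo 0 (1 / lam))
      (fun θ : ℝ => -Real.log ((1 - θ • P).det) + Matrix.trace ((1 - θ • P)⁻¹ - 1)) := by
  obtain ⟨i₀, hi₀⟩ := hlam.1
  have hlam_pos : 0 < lam := hi₀ ▸ hP.eigenvalues_pos i₀
  have hpos : ∀ θ ∈ Set.Ioo 0 (1 / lam), ∀ i, 0 < 1 - θ * hP.1.eigenvalues i := fun θ hθ i => by
    have hθlam : θ * lam < 1 := (lt_div_iff₀ hlam_pos).1 hθ.2
    nlinarith [hlam.2 ⟨i, rfl⟩, hθ.1]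
  refine StrictConvexOn.congr ?_ fun θ hθ => (hP.1.neg_log_det_add_trace_eq_sum (hpos θ hθ)).symm
  refine StrictConvexOn.fun_sum ⟨i₀, Finset.mem_univ _⟩ fun i _ => ?_
  exact (strictConvexOn_neg_log_add_inv_sub_one.comp_one_sub_mul
    (hP.eigenvalues_pos i).ne').subset (fun θ hθ => hpos θ hθ i) (convex_Ioo _ _)
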